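/- arXiv:2506.00699 — 4 statements merged into one kernel-verified Lean document; each statement's English description precedes it below -/
import Mathlib

section
/- For all n, m ≥ 0, all permutations w ∈ S(n), τ ∈ S(m), and all nonnegative integers l, r with l + r = n, the following identities hold in S(n+m): (i) w′ *_l τ *_r w″ = (12)^{m,l,r} ∘ (τ×w) ∘ ((12)^{m,l,r})⁻¹, i.e. the insertion equals Ad((12)^{m,l,r})(τ×w); (ii) (w′ *_l τ *_r w″)⁻¹ = (w⁻¹)′ *_l τ⁻¹ *_r (w⁻¹)″. -/
/-!
Statement 1: identities for the insertion `w′ *_l τ *_r w″ ∈ S(n+m)` (with `n = l + r`):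

(i)  `w′ *_l τ *_r w″ = (12)^{m,l,r} ∘ (τ × w) ∘ ((12)^{m,l,r})⁻¹`, i.e. the insertion equals
     `Ad((12)^{m,l,r})(τ × w)`;
(ii) `(w′ *_l τ *_r w″)⁻¹ = (w⁻¹)′ *_l τ⁻¹ *_r (w⁻¹)″`.

Here the insertion sends `i ↦ w i` if `i < l` and `w i < l`; `i ↦ w i + m` if `i < l` and
`w i ≥ l`; `i ↦ l + τ (i - l)` for `l ≤ i < l + m`; and for `i ≥ l + m`, `i ↦ w (i-m)` resp.
`w (i-m) + m` according to whether `w (i-m) < l` or not.  `(12)^{m,l,r} ∈ S(m+l+r)` sends the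
first `m` letters `i ↦ i + l`, the next `l` letters back to the first `l` positions, and fixes
the last `r` letters.  `τ × w ∈ S(m + (l+r))` acts as `τ` on the first `m` letters and as a
shifted copy of `w` on the rest.
-/

noncomputable section

open Equiv

/-- The identification `Fin (l+r) ⊕ Fin m ≃ Fin (l+r+m)` sending `inl j ↦ j` for `j < l`,
`inl j ↦ j + m` for `j ≥ l`, and `inr t ↦ l + t`.  Conjugating `w ⊕ τ` by it realizes
"splitting `w` apart and inserting `τ` in the middle". -/
def insertionCoding (l r m : ℕ) : (Fin (l + r) ⊕ Fin m) ≃ Fin (l + r + m) :=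
  (Equiv.sumCongr (finSumFinEquiv.symm : Fin (l + r) ≃ Fin l ⊕ Fin r) (Equiv.refl (Fin m))).trans
    ((Equiv.sumAssoc (Fin l) (Fin r) (Fin m)).trans
      ((Equiv.sumCongr (Equiv.refl (Fin l)) (Equiv.sumComm (Fin r) (Fin m))).trans
        ((Equiv.sumCongr (Equiv.refl (Fin l)) (finSumFinEquiv : Fin m ⊕ Fin r ≃ Fin (m + r))).trans
          ((finSumFinEquiv : Fin l ⊕ Fin (m + r) ≃ Fin (l + (m + r))).trans
            (finCongr (by omega))))))

/-- The insertion `w′ *_l τ *_r w″ ∈ S(n + m)` for `w ∈ S(n)`, `n = l + r`, `τ ∈ S(m)`. -/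
def insertion (l r m : ℕ) (w : Equiv.Perm (Fin (l + r))) (τ : Equiv.Perm (Fin m)) :
    Equiv.Perm (Fin (l + r + m)) :=
  (insertionCoding l r m).permCongr (Equiv.sumCongr w τ)

/-- The block permutation `(12)^{m,l,r} ∈ S(m+l+r)`. -/
def swapMLR (m l r : ℕ) : Equiv.Perm (Fin (m + l + r)) :=
  ((finSumFinEquiv.symm : Fin (m + l + r) ≃ Fin (m + l) ⊕ Fin r).trans
    ((Equiv.sumCongr (finSumFinEquiv.symm : Fin (m + l) ≃ Fin m ⊕ Fin l) (Equiv.refl (Fin r))).trans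
      ((Equiv.sumCongr (Equiv.sumComm (Fin m) (Fin l)) (Equiv.refl (Fin r))).trans
        ((Equiv.sumCongr (finSumFinEquiv : Fin l ⊕ Fin m ≃ Fin (l + m)) (Equiv.refl (Fin r))).trans
          ((finSumFinEquiv : Fin (l + m) ⊕ Fin r ≃ Fin (l + m + r)).trans
            (finCongr (by omega)))))))

/-- The juxtaposition `τ × w ∈ S(m + l + r)` of `τ ∈ S(m)` and `w ∈ S(l + r)`. -/
def juxtPair (m l r : ℕ) (τ : Equiv.Perm (Fin m)) (w : Equiv.Perm (Fin (l + r))) :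
    Equiv.Perm (Fin (m + l + r)) :=
  ((finSumFinEquiv.trans (finCongr (by omega : m + (l + r) = m + l + r))).permCongr
    (Equiv.sumCongr τ w))


/-!
Both sides of (i) conjugate the same permutation `τ ⊕ w` of `Fin m ⊕ Fin (l + r)`, by two
bijections onto `Fin (l + r + m)`; these agree, since on values both send the `τ`-letters `t`
to `l + t` and the `w`-letters `j` to `j` or `j + m` according as `j < l`. Identity (ii) holds
because conjugation and `⊕` are multiplicative.
-/

namespace Equiv

theorem permCongr_permCongr {α β γ : Type*} (e : α ≃ β) (f : β ≃ γ) (σ : Perm α) :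
    f.permCongr (e.permCongr σ) = (e.trans f).permCongr σ :=
  rfl

theorem sumComm_permCongr_sumCongr {α β : Type*} (σ : Perm α) (τ : Perm β) :
    (sumComm α β).permCongr (sumCongr σ τ) = sumCongr τ σ := by
  ext (x | x) <;> rfl

end Equiv

theorem insertionCoding_inl_val (l r m : ℕ) (j : Fin (l + r)) :
    (insertionCoding l r m (Sum.inl j) : ℕ) = if (j : ℕ) < l then (j : ℕ) else j + m := by
  induction j using Fin.addCases with
  | left j => simp [insertionCoding]
  | right j => simp [insertionCoding]; omega

theorem insertionCoding_inr_val (l r m : ℕ) (t : Fin m) :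
    (insertionCoding l r m (Sum.inr t) : ℕ) = l + t := by
  simp [insertionCoding]

theorem swapMLR_val (m l r : ℕ) (i : Fin (m + l + r)) :
    (swapMLR m l r i : ℕ) = if (i : ℕ) < m then i + l else if (i : ℕ) < m + l then i - m else i := by
  induction i using Fin.addCases with
  | left i =>
    induction i using Fin.addCases with
    | left i => simp [swapMLR]; omega
    | right i => simp [swapMLR]
  | right i => simp [swapMLR]; omega

theorem sumComm_trans_insertionCoding (l r m : ℕ) :
    (sumComm (Fin m) (Fin (l + r))).trans (insertionCoding l r m) =
      (finSumFinEquiv.trans (finCongr (by omega : m + (l + r) = m + l + r))).trans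
        ((swapMLR m l r).trans (finCongr (by ring : m + l + r = l + r + m))) := by
  ext (t | j)
  · have := t.isLt
    simp only [trans_apply, sumComm_apply, Sum.swap_inl, insertionCoding_inr_val, finCongr_apply,
      Fin.val_cast, swapMLR_val, finSumFinEquiv_apply_left, Fin.val_castAdd]
    split_ifs
    omega
  · have := j.isLt
    simp only [trans_apply, sumComm_apply, Sum.swap_inr, insertionCoding_inl_val, finCongr_apply,
      Fin.val_cast, swapMLR_val, finSumFinEquiv_apply_right, Fin.val_natAdd]
    split_ifs <;> omega

theorem insertion_inv (l r m : ℕ) (w : Perm (Fin (l + r))) (τ : Perm (Fin m)) :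
    (insertion l r m w τ)⁻¹ = insertion l r m w⁻¹ τ⁻¹ :=
  map_inv (insertionCoding l r m).permCongrHom (sumCongr w τ)

theorem insertion_eq_conj_and_inv (l r m : ℕ)
    (w : Equiv.Perm (Fin (l + r))) (τ : Equiv.Perm (Fin m)) :
    insertion l r m w τ =
      (finCongr (by omega : m + l + r = l + r + m)).permCongr
        (swapMLR m l r * juxtPair m l r τ w * (swapMLR m l r)⁻¹)
    ∧ (insertion l r m w τ)⁻¹ = insertion l r m w⁻¹ τ⁻¹ := by
  refine ⟨?_, insertion_inv l r m w τ⟩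
  rw [insertion, juxtPair, ← permCongr_eq_mul, permCongr_permCongr, permCongr_permCongr,
    ← sumComm_permCongr_sumCongr τ w, permCongr_permCongr, sumComm_trans_insertionCoding]

end
end

section
/- Let {{−,−}} be a double Poisson bracket on A. Then the associated bracket {−,−} := μ∘{{−,−}}: A⊗A → A descends to a well-defined k-bilinear map A_♮ × A_♮ → A_♮ (the class of {a,b} in A_♮ depends only on the classes ā and b̄), and the induced map is skew-symmetric and satisfies the Jacobi identity; thus it makes A_♮ into a Lie algebra over k. -/
/-!
Statement 3: if `{{-,-}}` is a double Poisson bracket on a unital associative `k`-algebra `A`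
(char `k = 0`), then `{a,b} := μ({{a,b}})` descends to a well-defined `k`-bilinear bracket on
`A_♮ = A/[A,A]` which is skew-symmetric and satisfies the Jacobi identity, making `A_♮` a Lie
algebra over `k`.
-/

noncomputable section

open TensorProduct

variable (k : Type*) [Field k] [CharZero k]
variable (A : Type*) [Ring A] [Algebra k A]

/-- `{{a, x′⊗x″}}_L := {{a,x′}} ⊗ x″`, as a linear map `A ⊗ A → (A ⊗ A) ⊗ A`. -/
def leftExt (D : A ⊗[k] A →ₗ[k] A ⊗[k] A) (a : A) :
    A ⊗[k] A →ₗ[k] (A ⊗[k] A) ⊗[k] A :=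
  LinearMap.rTensor A (D ∘ₗ TensorProduct.mk k A A a)

/-- The cyclic permutation `σ(x′⊗x″⊗x‴) = x‴⊗x′⊗x″` on `(A ⊗ A) ⊗ A`. -/
def cyc : (A ⊗[k] A) ⊗[k] A →ₗ[k] (A ⊗[k] A) ⊗[k] A :=
  (TensorProduct.assoc k A A A).symm.toLinearMap ∘ₗ
    (TensorProduct.comm k (A ⊗[k] A) A).toLinearMap

/-- A double Poisson bracket on `A`: a linear map `D : A ⊗ A → A ⊗ A` which is skew-symmetric,
satisfies the Leibniz rule in its second argument (for the outer bimodule structure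
`a·(x′⊗x″)·b = (a x′) ⊗ (x″ b)`), and satisfies the double Jacobi identity. -/
def IsDoublePoisson (D : A ⊗[k] A →ₗ[k] A ⊗[k] A) : Prop :=
  (∀ a b : A, D (a ⊗ₜ[k] b) = - (TensorProduct.comm k A A) (D (b ⊗ₜ[k] a))) ∧
  (∀ a b c : A,
      D (a ⊗ₜ[k] (b * c)) =
        LinearMap.lTensor A (LinearMap.mulRight k c) (D (a ⊗ₜ[k] b)) +
        LinearMap.rTensor A (LinearMap.mulLeft k b) (D (a ⊗ₜ[k] c))) ∧
  (∀ a b c : A,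
      leftExt k A D a (D (b ⊗ₜ[k] c)) +
      cyc k A (leftExt k A D b (D (c ⊗ₜ[k] a))) +
      cyc k A (cyc k A (leftExt k A D c (D (a ⊗ₜ[k] b)))) = 0)

/-- The associated bracket `{a,b} = μ({{a,b}})`. -/
def assocBracket (D : A ⊗[k] A →ₗ[k] A ⊗[k] A) (a b : A) : A :=
  LinearMap.mul' k A (D (a ⊗ₜ[k] b))

/-- The commutator subspace `[A,A] ⊆ A`. -/
def commutatorSubmodule : Submodule k A :=
  Submodule.span k {x : A | ∃ a b : A, x = a * b - b * a}

/-! ### Auxiliary material -/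

/-- Triple multiplication `(x⊗y)⊗z ↦ xyz`. -/
def m3 : (A ⊗[k] A) ⊗[k] A →ₗ[k] A :=
  (LinearMap.mul' k A) ∘ₗ LinearMap.rTensor A (LinearMap.mul' k A)

lemma m3_tmul (x y z : A) : m3 k A ((x ⊗ₜ[k] y) ⊗ₜ[k] z) = x * y * z := by
  simp [m3]

lemma cyc_tmul (x y z : A) :
    cyc k A ((x ⊗ₜ[k] y) ⊗ₜ[k] z) = (z ⊗ₜ[k] x) ⊗ₜ[k] y := by
  simp [cyc]

lemma comm_mem (x y : A) : x * y - y * x ∈ commutatorSubmodule k A :=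
  Submodule.subset_span ⟨x, y, rfl⟩

lemma mkQ_mul_comm (x y : A) :
    (commutatorSubmodule k A).mkQ (x * y) = (commutatorSubmodule k A).mkQ (y * x) := by
  rw [← sub_eq_zero, ← map_sub, Submodule.mkQ_apply, Submodule.Quotient.mk_eq_zero]
  exact comm_mem k A x y

lemma mkQ_m3_cyc (t : (A ⊗[k] A) ⊗[k] A) :
    (commutatorSubmodule k A).mkQ (m3 k A (cyc k A t)) =
    (commutatorSubmodule k A).mkQ (m3 k A t) := by
  induction t using TensorProduct.induction_on with
  | zero => simp
  | add u v hu hv => simp only [map_add, hu, hv]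
  | tmul p z =>
    induction p using TensorProduct.induction_on with
    | zero => simp
    | add u v hu hv =>
      simp only [TensorProduct.add_tmul, map_add, hu, hv]
    | tmul x y =>
      rw [cyc_tmul, m3_tmul, m3_tmul, mul_assoc z x y]
      exact mkQ_mul_comm k A z (x * y)

lemma mul'_lTensor (y : A) (q : A ⊗[k] A) :
    LinearMap.mul' k A (LinearMap.lTensor A (LinearMap.mulRight k y) q) =
      LinearMap.mul' k A q * y := by
  induction q using TensorProduct.induction_on with
  | zero => simp
  | tmul a b => simp [mul_assoc]
  | add u v hu hv => simp only [map_add, hu, hv, add_mul]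

lemma mul'_rTensor (x : A) (q : A ⊗[k] A) :
    LinearMap.mul' k A (LinearMap.rTensor A (LinearMap.mulLeft k x) q) =
      x * LinearMap.mul' k A q := by
  induction q using TensorProduct.induction_on with
  | zero => simp
  | tmul a b => simp [mul_assoc]
  | add u v hu hv => simp only [map_add, hu, hv, mul_add]

lemma mkQ_mul'_comm (q : A ⊗[k] A) :
    (commutatorSubmodule k A).mkQ (LinearMap.mul' k A ((TensorProduct.comm k A A) q)) =
      (commutatorSubmodule k A).mkQ (LinearMap.mul' k A q) := by
  induction q using TensorProduct.induction_on with
  | zero => simp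
  | tmul a b => simpa using mkQ_mul_comm k A b a
  | add u v hu hv => simp only [map_add, hu, hv]

/-- `F D a (x⊗y) = {a,x} y`. -/
def Fmap (D : A ⊗[k] A →ₗ[k] A ⊗[k] A) (a : A) : A ⊗[k] A →ₗ[k] A :=
  m3 k A ∘ₗ leftExt k A D a

lemma Fmap_tmul (D : A ⊗[k] A →ₗ[k] A ⊗[k] A) (a x y : A) :
    Fmap k A D a (x ⊗ₜ[k] y) = LinearMap.mul' k A (D (a ⊗ₜ[k] x)) * y := by
  simp only [Fmap, leftExt, LinearMap.comp_apply, LinearMap.rTensor_tmul,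
    TensorProduct.mk_apply, m3, LinearMap.mul'_apply]

lemma bracket_mul (D : A ⊗[k] A →ₗ[k] A ⊗[k] A) (hD : IsDoublePoisson k A D) (a b c : A) :
    assocBracket k A D a (b * c) =
      assocBracket k A D a b * c + b * assocBracket k A D a c := by
  unfold assocBracket
  rw [hD.2.1 a b c, map_add, mul'_lTensor, mul'_rTensor]

lemma skewQ (D : A ⊗[k] A →ₗ[k] A ⊗[k] A) (hD : IsDoublePoisson k A D) (a b : A) :
    (commutatorSubmodule k A).mkQ (assocBracket k A D a b) =
      - (commutatorSubmodule k A).mkQ (assocBracket k A D b a) := by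
  unfold assocBracket
  rw [hD.1 a b, map_neg, map_neg, mkQ_mul'_comm]

lemma keyQ (D : A ⊗[k] A →ₗ[k] A ⊗[k] A) (hD : IsDoublePoisson k A D) (a : A)
    (p : A ⊗[k] A) :
    (commutatorSubmodule k A).mkQ (LinearMap.mul' k A (D (a ⊗ₜ[k] LinearMap.mul' k A p))) =
      (commutatorSubmodule k A).mkQ (Fmap k A D a p) +
      (commutatorSubmodule k A).mkQ (Fmap k A D a ((TensorProduct.comm k A A) p)) := by
  induction p using TensorProduct.induction_on with
  | zero => simp
  | tmul x y =>
    simp only [LinearMap.mul'_apply, hD.2.1 a x y, map_add, mul'_lTensor, mul'_rTensor,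
      TensorProduct.comm_tmul, Fmap_tmul]
    rw [mkQ_mul_comm k A x (LinearMap.mul' k A (D (a ⊗ₜ[k] y)))]
  | add u v hu hv =>
    simp only [map_add, TensorProduct.tmul_add] at *
    rw [hu, hv]
    abel

lemma GzeroQ (D : A ⊗[k] A →ₗ[k] A ⊗[k] A) (hD : IsDoublePoisson k A D) (a b c : A) :
    (commutatorSubmodule k A).mkQ (Fmap k A D a (D (b ⊗ₜ[k] c))) +
    (commutatorSubmodule k A).mkQ (Fmap k A D b (D (c ⊗ₜ[k] a))) +
    (commutatorSubmodule k A).mkQ (Fmap k A D c (D (a ⊗ₜ[k] b))) = 0 := by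
  have h := congrArg (fun t => (commutatorSubmodule k A).mkQ (m3 k A t)) (hD.2.2 a b c)
  simp only [map_add, map_zero] at h
  rw [mkQ_m3_cyc, mkQ_m3_cyc, mkQ_m3_cyc] at h
  simpa only [Fmap, LinearMap.comp_apply] using h

lemma jacobiQ (D : A ⊗[k] A →ₗ[k] A ⊗[k] A) (hD : IsDoublePoisson k A D) (a b c : A) :
    (commutatorSubmodule k A).mkQ (assocBracket k A D a (assocBracket k A D b c)) +
    (commutatorSubmodule k A).mkQ (assocBracket k A D b (assocBracket k A D c a)) +
    (commutatorSubmodule k A).mkQ (assocBracket k A D c (assocBracket k A D a b)) = 0 := by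
  have hcomm : ∀ x y : A, (TensorProduct.comm k A A) (D (x ⊗ₜ[k] y)) = - D (y ⊗ₜ[k] x) := by
    intro x y
    rw [hD.1 y x, neg_neg]
  have k1 := keyQ k A D hD a (D (b ⊗ₜ[k] c))
  have k2 := keyQ k A D hD b (D (c ⊗ₜ[k] a))
  have k3 := keyQ k A D hD c (D (a ⊗ₜ[k] b))
  rw [hcomm b c, map_neg, map_neg] at k1
  rw [hcomm c a, map_neg, map_neg] at k2
  rw [hcomm a b, map_neg, map_neg] at k3
  have g1 := GzeroQ k A D hD a b c
  have g2 := GzeroQ k A D hD a c b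
  unfold assocBracket at *
  calc _ = ((commutatorSubmodule k A).mkQ (Fmap k A D a (D (b ⊗ₜ[k] c))) +
            (commutatorSubmodule k A).mkQ (Fmap k A D b (D (c ⊗ₜ[k] a))) +
            (commutatorSubmodule k A).mkQ (Fmap k A D c (D (a ⊗ₜ[k] b)))) -
           ((commutatorSubmodule k A).mkQ (Fmap k A D a (D (c ⊗ₜ[k] b))) +
            (commutatorSubmodule k A).mkQ (Fmap k A D c (D (b ⊗ₜ[k] a))) +
            (commutatorSubmodule k A).mkQ (Fmap k A D b (D (a ⊗ₜ[k] c)))) := by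
        rw [k1, k2, k3]; abel
    _ = 0 := by rw [g1, g2]; simp

/-- The bracket as a bilinear map into the quotient. -/
def brQ (D : A ⊗[k] A →ₗ[k] A ⊗[k] A) :
    A →ₗ[k] A →ₗ[k] A ⧸ commutatorSubmodule k A :=
  (TensorProduct.mk k A A).compr₂
    ((commutatorSubmodule k A).mkQ ∘ₗ (LinearMap.mul' k A) ∘ₗ D)

lemma brQ_apply (D : A ⊗[k] A →ₗ[k] A ⊗[k] A) (a b : A) :
    brQ k A D a b = (commutatorSubmodule k A).mkQ (assocBracket k A D a b) := rfl

theorem doublePoisson_descends_to_Lie_on_Anat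
    (D : A ⊗[k] A →ₗ[k] A ⊗[k] A) (hD : IsDoublePoisson k A D) :
    ∃ B : (A ⧸ commutatorSubmodule k A) →ₗ[k]
          (A ⧸ commutatorSubmodule k A) →ₗ[k] (A ⧸ commutatorSubmodule k A),
      (∀ a b : A,
          B ((commutatorSubmodule k A).mkQ a) ((commutatorSubmodule k A).mkQ b) =
            (commutatorSubmodule k A).mkQ (assocBracket k A D a b)) ∧
      (∀ x y, B x y = - B y x) ∧
      (∀ x y z, B x (B y z) + B y (B z x) + B z (B x y) = 0) := by
  classical
  have hright : ∀ a : A, ∀ u ∈ commutatorSubmodule k A, brQ k A D a u = 0 := by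
    intro a u hu
    induction hu using Submodule.span_induction with
    | mem x hx =>
      obtain ⟨b, c, rfl⟩ := hx
      rw [map_sub, brQ_apply, brQ_apply, bracket_mul k A D hD, bracket_mul k A D hD,
        map_add, map_add,
        mkQ_mul_comm k A (assocBracket k A D a b) c,
        mkQ_mul_comm k A b (assocBracket k A D a c)]
      abel
    | zero => simp
    | add x y _ _ hx hy => rw [map_add, hx, hy, add_zero]
    | smul t x _ hx => rw [map_smul, hx, smul_zero]
  have hleft : ∀ u ∈ commutatorSubmodule k A, brQ k A D u = 0 := by
    intro u hu
    ext b
    rw [brQ_apply, skewQ k A D hD, ← brQ_apply, hright b u hu, neg_zero,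
      LinearMap.zero_apply]
  set C := commutatorSubmodule k A with hC
  have hsurj : ∀ x : A ⧸ C, ∃ a : A, C.mkQ a = x := fun x =>
    Submodule.Quotient.mk_surjective C x
  let B1 : (A ⧸ C) →ₗ[k] A →ₗ[k] A ⧸ C :=
    Submodule.liftQ C (brQ k A D) (fun u hu => LinearMap.mem_ker.mpr (hleft u hu))
  have hB1 : ∀ a : A, B1 (C.mkQ a) = brQ k A D a := fun a => rfl
  have hB2ker : C ≤ LinearMap.ker B1.flip := by
    intro u hu
    rw [LinearMap.mem_ker]
    ext x
    show B1 (C.mkQ x) u = 0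
    rw [hB1]
    exact hright x u hu
  let B : (A ⧸ C) →ₗ[k] (A ⧸ C) →ₗ[k] A ⧸ C :=
    (Submodule.liftQ C B1.flip hB2ker).flip
  have hBapp : ∀ a b : A, B (C.mkQ a) (C.mkQ b) =
      C.mkQ (assocBracket k A D a b) := by
    intro a b
    show (Submodule.liftQ C B1.flip hB2ker) (C.mkQ b) (C.mkQ a) = _
    rw [Submodule.mkQ_apply, Submodule.liftQ_apply]
    show B1 (C.mkQ a) b = _
    rw [hB1, brQ_apply]
  refine ⟨B, hBapp, ?_, ?_⟩
  · intro x y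
    obtain ⟨a, rfl⟩ := hsurj x
    obtain ⟨b, rfl⟩ := hsurj y
    rw [hBapp, hBapp, skewQ k A D hD]
  · intro x y z
    obtain ⟨a, rfl⟩ := hsurj x
    obtain ⟨b, rfl⟩ := hsurj y
    obtain ⟨c, rfl⟩ := hsurj z
    rw [hBapp b c, hBapp c a, hBapp a b, hBapp, hBapp, hBapp]
    exact jacobiQ k A D hD a b c

end
end

section
/- Let {{−,−}} be a double Poisson bracket on A and N ≥ 1. Then there is a unique Poisson bracket {−,−}_N on O(Rep_N(A)) — that is, a k-bilinear antisymmetric map O(Rep_N(A)) × O(Rep_N(A)) → O(Rep_N(A)) satisfying the Jacobi identity and the Leibniz rule {F, GH}_N = {F,G}_N·H + G·{F,H}_N in each argument — such that for all a, b ∈ A and all 1 ≤ i,j,s,t ≤ N one has {a_{ij}, b_{st}}_N = Σ_r (u_r)_{sj}·(v_r)_{it}, where {{a,b}} = Σ_r u_r ⊗ v_r. -/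
/-!
A biderivation of a polynomial ring may take arbitrary values on pairs of variables. Prescribing
`{a_{ij}, b_{st}} = Σ_r (u_r)_{sj} (v_r)_{it}` gives a biderivation of `k[a_{ij}]` with values in
`O(Rep_N(A))`; it is antisymmetric because `{{-,-}}` is, and it kills the defining relations of
`O(Rep_N(A))` because `{{a,-}}` is linear and satisfies the Leibniz rule, so it descends to a
biderivation of `O(Rep_N(A))`. The Jacobiator of an antisymmetric biderivation is a derivation in
each argument, so it vanishes as soon as it vanishes on generators, and on generators it is the
double Jacobi identity evaluated by `x′ ⊗ x″ ⊗ x‴ ↦ x′_{αβ} x″_{γδ} x‴_{εζ}`. Uniqueness holds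
because a biderivation is determined by its values on generators.
-/

noncomputable section

set_option maxHeartbeats 1000000
set_option synthInstance.maxHeartbeats 100000

open TensorProduct MvPolynomial

variable (k : Type*) [Field k] [CharZero k]
variable (A : Type*) [Ring A] [Algebra k A]
variable (N : ℕ)

/-- Defining relations of the coordinate ring `O(Rep_N(A))`. -/
def repRel : Set (MvPolynomial (A × Fin N × Fin N) k) :=
  {p | (∃ (a b : A) (i j : Fin N), p = X (a + b, i, j) - X (a, i, j) - X (b, i, j)) ∨
       (∃ (c : k) (a : A) (i j : Fin N), p = X (c • a, i, j) - MvPolynomial.C c * X (a, i, j)) ∨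
       (∃ (a b : A) (i j : Fin N),
          p = X (a * b, i, j) - ∑ s : Fin N, X (a, i, s) * X (b, s, j)) ∨
       (∃ i j : Fin N, p = X ((1 : A), i, j) - if i = j then 1 else 0)}

/-- The coordinate ring `O(Rep_N(A))`, presented by generators `a_{ij}` and relations. -/
def RepAlg := MvPolynomial (A × Fin N × Fin N) k ⧸ Ideal.span (repRel k A N)

instance : CommRing (RepAlg k A N) :=
  inferInstanceAs (CommRing (MvPolynomial (A × Fin N × Fin N) k ⧸ Ideal.span (repRel k A N)))

instance : Algebra k (RepAlg k A N) :=
  inferInstanceAs (Algebra k (MvPolynomial (A × Fin N × Fin N) k ⧸ Ideal.span (repRel k A N)))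

/-- The generator `a_{ij}` of `O(Rep_N(A))`, as a `k`-linear map in `a`. -/
def genL (i j : Fin N) : A →ₗ[k] RepAlg k A N where
  toFun a := Ideal.Quotient.mkₐ k (Ideal.span (repRel k A N)) (X (a, i, j))
  map_add' a b := by
    have h : (X (a + b, i, j) - (X (a, i, j) + X (b, i, j)) : MvPolynomial (A × Fin N × Fin N) k)
        ∈ Ideal.span (repRel k A N) :=
      Ideal.subset_span (Or.inl ⟨a, b, i, j, by ring⟩)
    show Ideal.Quotient.mkₐ k _ (X (a + b, i, j)) =
      Ideal.Quotient.mkₐ k _ (X (a, i, j)) + Ideal.Quotient.mkₐ k _ (X (b, i, j))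
    refine Eq.trans ?_ (map_add (Ideal.Quotient.mkₐ k (Ideal.span (repRel k A N))) (X (a, i, j)) (X (b, i, j)))
    exact Ideal.Quotient.eq.mpr h
  map_smul' c a := by
    have h : (X (c • a, i, j) - MvPolynomial.C c * X (a, i, j) :
        MvPolynomial (A × Fin N × Fin N) k) ∈ Ideal.span (repRel k A N) :=
      Ideal.subset_span (Or.inr (Or.inl ⟨c, a, i, j, by ring⟩))
    show Ideal.Quotient.mkₐ k _ (X (c • a, i, j)) = c • Ideal.Quotient.mkₐ k _ (X (a, i, j))
    refine Eq.trans ?_ (map_smul (Ideal.Quotient.mkₐ k (Ideal.span (repRel k A N))) c (X (a, i, j)))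
    rw [MvPolynomial.smul_eq_C_mul]
    exact Ideal.Quotient.eq.mpr h

/-- The bilinear map `(u, v) ↦ u_{sj} · v_{it}` on `A × A` with values in `O(Rep_N(A))`. -/
def genPairing (s j i t : Fin N) : A →ₗ[k] A →ₗ[k] RepAlg k A N :=
  (LinearMap.mul k (RepAlg k A N)).compl₁₂ (genL k A N s j) (genL k A N i t)

section PolyBracket

variable {R σ M S : Type*} [CommRing R] [CommRing S] [Algebra R S]
  [Algebra (MvPolynomial σ R) S] [IsScalarTower R (MvPolynomial σ R) S]

theorem MvPolynomial.linearMap_eq_zero_of_leibniz [AddCommGroup M] [Module R M]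
    [Module (MvPolynomial σ R) M] [IsScalarTower R (MvPolynomial σ R) M]
    {L : MvPolynomial σ R →ₗ[R] M} (hL : ∀ p q, L (p * q) = p • L q + q • L p)
    (hX : ∀ i, L (X i) = 0) : L = 0 :=
  congrArg Derivation.toLinearMap (derivation_ext (D₁ := Derivation.mk' L hL) (D₂ := 0) hX)

/-- The biderivation `{F, G} = Σ_{v,w} ∂_v F · ∂_w G · f v w`. -/
def polyBracket (f : σ → σ → S) :
    MvPolynomial σ R →ₗ[R] MvPolynomial σ R →ₗ[R] S :=
  LinearMap.mk₂ R (fun F G => mkDerivation R (fun w => mkDerivation R (fun v => f v w) F) G)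
    (fun F F' G => by
      simp only [map_add]
      exact DFunLike.congr_fun ((mkDerivationEquiv R).map_add _ _) G)
    (fun c F G => by
      simp only [Derivation.map_smul]
      exact DFunLike.congr_fun ((mkDerivationEquiv R).map_smul c _) G)
    (fun F G G' => map_add _ G G')
    (fun c F G => Derivation.map_smul _ c G)

variable (f : σ → σ → S)

theorem polyBracket_apply_X (F : MvPolynomial σ R) (w : σ) :
    polyBracket f F (X w) = mkDerivation R (fun v => f v w) F :=
  mkDerivation_X R _ w

theorem polyBracket_X_apply (v : σ) (G : MvPolynomial σ R) :
    polyBracket f (X v : MvPolynomial σ R) G = mkDerivation R (f v) G := by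
  show mkDerivation R (fun w => mkDerivation R (fun v => f v w) (X v)) G = _
  simp only [mkDerivation_X]

theorem polyBracket_X_X (v w : σ) : polyBracket f (X v : MvPolynomial σ R) (X w) = f v w := by
  rw [polyBracket_X_apply, mkDerivation_X]

theorem polyBracket_mul_right (F G H : MvPolynomial σ R) :
    polyBracket f F (G * H) = G • polyBracket f F H + H • polyBracket f F G :=
  Derivation.leibniz _ G H

theorem polyBracket_mul_left (F G H : MvPolynomial σ R) :
    polyBracket f (F * G) H = F • polyBracket f G H + G • polyBracket f F H := by
  have h : mkDerivation R (fun w => mkDerivation R (fun v => f v w) (F * G)) =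
      F • mkDerivation R (fun w => mkDerivation R (fun v => f v w) G) +
        G • mkDerivation R (fun w => mkDerivation R (fun v => f v w) F) :=
    derivation_ext fun w => by simp only [Derivation.add_apply, Derivation.smul_apply,
      mkDerivation_X, Derivation.leibniz]
  exact DFunLike.congr_fun h H

theorem polyBracket_antisymm (hf : ∀ v w, f v w = -f w v) (F G : MvPolynomial σ R) :
    polyBracket f F G = -polyBracket f G F := by
  have hX : ∀ w F, polyBracket f F (X w) + polyBracket f (X w : MvPolynomial σ R) F = 0 := by
    intro w F
    have h : mkDerivation R (fun v => f v w) + mkDerivation R (f w) = 0 :=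
      derivation_ext fun v => by simp [mkDerivation_X, hf v w]
    rw [polyBracket_apply_X, polyBracket_X_apply]
    exact DFunLike.congr_fun h F
  have h : polyBracket f F + (polyBracket f).flip F = 0 := by
    refine linearMap_eq_zero_of_leibniz (fun G H => ?_) (fun w => hX w F)
    simp only [LinearMap.add_apply, LinearMap.flip_apply, polyBracket_mul_right,
      polyBracket_mul_left, smul_add]
    abel
  exact eq_neg_of_add_eq_zero_left (DFunLike.congr_fun h G)

theorem polyBracket_eq_zero_of_mem_span {s : Set (MvPolynomial σ R)}
    (hs : ∀ r ∈ Ideal.span s, algebraMap (MvPolynomial σ R) S r = 0)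
    (hX : ∀ v, ∀ r ∈ s, polyBracket f (X v : MvPolynomial σ R) r = 0) (F : MvPolynomial σ R)
    {G : MvPolynomial σ R} (hG : G ∈ Ideal.span s) : polyBracket f F G = 0 := by
  induction hG using Submodule.span_induction generalizing F with
  | mem r hr =>
    have h : (polyBracket f).flip r = 0 := by
      refine linearMap_eq_zero_of_leibniz (fun G H => ?_) (fun v => hX v r hr)
      simp only [LinearMap.flip_apply, polyBracket_mul_left]
    exact DFunLike.congr_fun h F
  | zero => exact map_zero _
  | add x y _ _ hx hy => rw [map_add, hx, hy, add_zero]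
  | smul p x hx' hx =>
    rw [smul_eq_mul, polyBracket_mul_right, hx, smul_zero, Algebra.smul_def, hs x hx', zero_mul,
      add_zero]

end PolyBracket

section Descent

variable {R M M' P : Type*} [CommRing R] [AddCommGroup M] [AddCommGroup M'] [AddCommGroup P]
  [Module R M] [Module R M'] [Module R P]

def LinearMap.liftOfSurjective (π : M →ₗ[R] M') (hπ : Function.Surjective π) (g : M →ₗ[R] P)
    (h : LinearMap.ker π ≤ LinearMap.ker g) : M' →ₗ[R] P :=
  (LinearMap.ker π).liftQ g h ∘ₗ (π.quotKerEquivOfSurjective hπ).symm.toLinearMap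

theorem LinearMap.liftOfSurjective_apply (π : M →ₗ[R] M') (hπ : Function.Surjective π)
    (g : M →ₗ[R] P) (h : LinearMap.ker π ≤ LinearMap.ker g) (x : M) :
    π.liftOfSurjective hπ g h (π x) = g x := by
  have hx : (π.quotKerEquivOfSurjective hπ).symm (π x) = Submodule.Quotient.mk x :=
    (LinearEquiv.symm_apply_eq _).mpr (π.quotKerEquivOfSurjective_apply_mk hπ x).symm
  simp only [liftOfSurjective, coe_comp, LinearEquiv.coe_coe, Function.comp_apply, hx,
    Submodule.liftQ_apply]

def LinearMap.lift₂OfSurjective (π : M →ₗ[R] M') (hπ : Function.Surjective π)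
    (B : M →ₗ[R] M →ₗ[R] P) (h₁ : ∀ x ∈ LinearMap.ker π, ∀ y, B x y = 0)
    (h₂ : ∀ x, ∀ y ∈ LinearMap.ker π, B x y = 0) : M' →ₗ[R] M' →ₗ[R] P :=
  π.liftOfSurjective hπ
    (π.liftOfSurjective hπ B.flip fun y hy => mem_ker.mpr <| ext fun x => h₂ x y hy).flip
    fun x hx => mem_ker.mpr <| ext fun y' => by
      obtain ⟨y, rfl⟩ := hπ y'
      exact (DFunLike.congr_fun (π.liftOfSurjective_apply hπ B.flip _ y) x).trans (h₁ x hx y)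

theorem LinearMap.lift₂OfSurjective_apply (π : M →ₗ[R] M') (hπ : Function.Surjective π)
    (B : M →ₗ[R] M →ₗ[R] P) (h₁ : ∀ x ∈ LinearMap.ker π, ∀ y, B x y = 0)
    (h₂ : ∀ x, ∀ y ∈ LinearMap.ker π, B x y = 0) (x y : M) :
    π.lift₂OfSurjective hπ B h₁ h₂ (π x) (π y) = B x y := by
  rw [lift₂OfSurjective, liftOfSurjective_apply, flip_apply, liftOfSurjective_apply, flip_apply]

end Descent

section PoissonBracket

variable {R S : Type*} [CommRing R] [CommRing S] [Algebra R S]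

def IsLeibniz (P : S →ₗ[R] S →ₗ[R] S) : Prop :=
  ∀ x y z, P x (y * z) = P x y * z + y * P x z

def IsLeibniz.toDerivation {P : S →ₗ[R] S →ₗ[R] S} (hP : IsLeibniz P) (x : S) :
    Derivation R S S :=
  Derivation.mk' (P x) fun y z => by rw [hP, smul_eq_mul, smul_eq_mul]; ring

theorem IsLeibniz.ext {s : Set S} (hs : Algebra.adjoin R s = ⊤) {P Q : S →ₗ[R] S →ₗ[R] S}
    (hP : IsLeibniz P) (hP' : IsLeibniz P.flip) (hQ : IsLeibniz Q) (hQ' : IsLeibniz Q.flip)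
    (h : ∀ x ∈ s, ∀ y ∈ s, P x y = Q x y) : P = Q := by
  have hs' : ∀ x ∈ s, P x = Q x := fun x hx =>
    congrArg Derivation.toLinearMap
      (Derivation.ext_of_adjoin_eq_top (D1 := hP.toDerivation x) (D2 := hQ.toDerivation x) s hs
        fun y hy => h x hx y hy)
  refine LinearMap.ext fun x => LinearMap.ext fun y => ?_
  exact DFunLike.congr_fun (Derivation.ext_of_adjoin_eq_top (D1 := hP'.toDerivation y)
    (D2 := hQ'.toDerivation y) s hs fun x hx => DFunLike.congr_fun (hs' x hx) y) x

def jacobiator (P : S →ₗ[R] S →ₗ[R] S) (x y z : S) : S :=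
  P x (P y z) + P y (P z x) + P z (P x y)

theorem jacobiator_rotate (P : S →ₗ[R] S →ₗ[R] S) (x y z : S) :
    jacobiator P x y z = jacobiator P y z x := by
  unfold jacobiator; abel

theorem IsLeibniz.jacobiator_mul {P : S →ₗ[R] S →ₗ[R] S} (hP : IsLeibniz P)
    (hanti : ∀ x y, P x y = -P y x) (x y z w : S) :
    jacobiator P x y (z * w) = jacobiator P x y z * w + z * jacobiator P x y w := by
  unfold jacobiator
  rw [hanti (z * w) x, hanti (z * w) (P x y), hanti z x, hanti w x, hanti z (P x y),
    hanti w (P x y)]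
  unfold IsLeibniz at hP
  simp only [hP, map_add, map_neg]
  ring

def IsLeibniz.jacobiatorDerivation {P : S →ₗ[R] S →ₗ[R] S} (hP : IsLeibniz P)
    (hanti : ∀ x y, P x y = -P y x) (x y : S) : Derivation R S S :=
  Derivation.mk' (P x ∘ₗ P y + P y ∘ₗ P.flip x + P.flip (P x y)) fun z w => by
    have := hP.jacobiator_mul hanti x y z w
    simp only [jacobiator] at this
    simp only [LinearMap.add_apply, LinearMap.comp_apply, LinearMap.flip_apply, this, smul_eq_mul]
    ring

theorem IsLeibniz.jacobiator_eq_zero {s : Set S} (hs : Algebra.adjoin R s = ⊤)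
    {P : S →ₗ[R] S →ₗ[R] S} (hP : IsLeibniz P) (hanti : ∀ x y, P x y = -P y x)
    (h : ∀ x ∈ s, ∀ y ∈ s, ∀ z ∈ s, jacobiator P x y z = 0) (x y z : S) :
    jacobiator P x y z = 0 := by
  have vanish : ∀ x y, (∀ z ∈ s, jacobiator P x y z = 0) → ∀ z, jacobiator P x y z = 0 :=
    fun x y h => DFunLike.congr_fun
      (Derivation.ext_of_adjoin_eq_top (D1 := hP.jacobiatorDerivation hanti x y) (D2 := 0) s hs h)
  have h₂ : ∀ x ∈ s, ∀ y ∈ s, ∀ z, jacobiator P x y z = 0 := fun x hx y hy =>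
    vanish x y (h x hx y hy)
  have h₁ : ∀ x ∈ s, ∀ y z, jacobiator P x y z = 0 := fun x hx y z => by
    rw [← jacobiator_rotate]
    exact vanish z x (fun y hy => (jacobiator_rotate P z x y).trans (h₂ x hx y hy z)) y
  rw [jacobiator_rotate]
  exact vanish y z (fun x hx => (jacobiator_rotate P x y z).symm.trans (h₁ x hx y z)) x

end PoissonBracket

section RepAlg

variable {k : Type*} [Field k] {A : Type*} [Ring A] [Algebra k A] {N : ℕ}

local notation "𝒪" => MvPolynomial (A × Fin N × Fin N) k

instance : Algebra (MvPolynomial (A × Fin N × Fin N) k) (RepAlg k A N) :=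
  inferInstanceAs (Algebra 𝒪 (𝒪 ⧸ Ideal.span (repRel k A N)))

instance : IsScalarTower k (MvPolynomial (A × Fin N × Fin N) k) (RepAlg k A N) :=
  inferInstanceAs (IsScalarTower k 𝒪 (𝒪 ⧸ Ideal.span (repRel k A N)))

theorem RepAlg.algebraMap_X (a : A) (i j : Fin N) :
    algebraMap 𝒪 (RepAlg k A N) (X (a, i, j)) = genL k A N i j a :=
  rfl

theorem RepAlg.algebraMap_surjective : Function.Surjective (algebraMap 𝒪 (RepAlg k A N)) :=
  Ideal.Quotient.mk_surjective

theorem RepAlg.algebraMap_eq_zero_iff {F : 𝒪} :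
    algebraMap 𝒪 (RepAlg k A N) F = 0 ↔ F ∈ Ideal.span (repRel k A N) :=
  Ideal.Quotient.eq_zero_iff_mem

theorem RepAlg.adjoin_genL_eq_top :
    Algebra.adjoin k (Set.range fun v : A × Fin N × Fin N => genL k A N v.2.1 v.2.2 v.1) = ⊤ := by
  have h : (Set.range fun v : A × Fin N × Fin N => genL k A N v.2.1 v.2.2 v.1) =
      IsScalarTower.toAlgHom k 𝒪 (RepAlg k A N) '' Set.range X := by
    rw [← Set.range_comp]; rfl
  rw [h, Algebra.adjoin_image, adjoin_range_X, Algebra.map_top, AlgHom.range_eq_top]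
  exact RepAlg.algebraMap_surjective

theorem genL_mul (i j : Fin N) (a b : A) :
    genL k A N i j (a * b) = ∑ m, genL k A N i m a * genL k A N m j b := by
  have h : (X (a * b, i, j) - ∑ m, X (a, i, m) * X (b, m, j) : 𝒪) ∈ Ideal.span (repRel k A N) :=
    Ideal.subset_span (Or.inr (Or.inr (Or.inl ⟨a, b, i, j, rfl⟩)))
  rw [← RepAlg.algebraMap_eq_zero_iff, map_sub, sub_eq_zero, map_sum] at h
  simpa only [map_mul, RepAlg.algebraMap_X] using h

theorem lift_genPairing_tmul (α β γ δ : Fin N) (p q : A) :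
    lift (genPairing k A N α β γ δ) (p ⊗ₜ q) = genL k A N α β p * genL k A N γ δ q :=
  rfl

theorem lift_genPairing_comm (α β γ δ : Fin N) (T : A ⊗[k] A) :
    lift (genPairing k A N α β γ δ) (TensorProduct.comm k A A T) =
      lift (genPairing k A N γ δ α β) T := by
  induction T using TensorProduct.induction_on with
  | zero => simp only [map_zero]
  | tmul p q => rw [comm_tmul, lift_genPairing_tmul, lift_genPairing_tmul, mul_comm]
  | add x y hx hy => simp only [map_add, hx, hy]

theorem lift_genPairing_lTensor_mulRight (α β γ δ : Fin N) (b : A) (T : A ⊗[k] A) :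
    lift (genPairing k A N α β γ δ) (LinearMap.lTensor A (LinearMap.mulRight k b) T) =
      ∑ m, genL k A N m δ b * lift (genPairing k A N α β γ m) T := by
  induction T using TensorProduct.induction_on with
  | zero => simp only [map_zero, mul_zero, Finset.sum_const_zero]
  | tmul p q =>
    simp only [LinearMap.lTensor_tmul, LinearMap.mulRight_apply, lift_genPairing_tmul, genL_mul,
      Finset.mul_sum]
    exact Finset.sum_congr rfl fun m _ => by ring
  | add x y hx hy => simp only [map_add, hx, hy, mul_add, Finset.sum_add_distrib]

theorem lift_genPairing_rTensor_mulLeft (α β γ δ : Fin N) (a : A) (T : A ⊗[k] A) :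
    lift (genPairing k A N α β γ δ) (LinearMap.rTensor A (LinearMap.mulLeft k a) T) =
      ∑ m, genL k A N α m a * lift (genPairing k A N m β γ δ) T := by
  induction T using TensorProduct.induction_on with
  | zero => simp only [map_zero, mul_zero, Finset.sum_const_zero]
  | tmul p q =>
    simp only [LinearMap.rTensor_tmul, LinearMap.mulLeft_apply, lift_genPairing_tmul, genL_mul,
      Finset.sum_mul]
    exact Finset.sum_congr rfl fun m _ => by ring
  | add x y hx hy => simp only [map_add, hx, hy, mul_add, Finset.sum_add_distrib]

theorem IsDoublePoisson.tmul_one {D : A ⊗[k] A →ₗ[k] A ⊗[k] A} (hD : IsDoublePoisson k A D)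
    (a : A) : D (a ⊗ₜ 1) = 0 := by
  have h := hD.2.1 a 1 1
  simp only [mul_one, LinearMap.mulRight_one, LinearMap.mulLeft_one, LinearMap.lTensor_id,
    LinearMap.rTensor_id, LinearMap.id_apply] at h
  exact left_eq_add.mp h

variable (D : A ⊗[k] A →ₗ[k] A ⊗[k] A)

/-- `{a_{ij}, b_{st}}` for `v = (a, i, j)` and `w = (b, s, t)`. -/
def genBracket (v w : A × Fin N × Fin N) : RepAlg k A N :=
  lift (genPairing k A N w.2.1 v.2.2 v.2.1 w.2.2) (D (v.1 ⊗ₜ w.1))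

variable {D}

theorem genBracket_antisymm (hD : IsDoublePoisson k A D) (v w : A × Fin N × Fin N) :
    genBracket D v w = -genBracket D w v := by
  rw [genBracket, genBracket, hD.1, map_neg, lift_genPairing_comm]

theorem polyBracket_genBracket_X_of_mem_repRel (hD : IsDoublePoisson k A D)
    (v : A × Fin N × Fin N) {r : 𝒪} (hr : r ∈ repRel k A N) :
    polyBracket (genBracket D) (X v : 𝒪) r = 0 := by
  rw [polyBracket_X_apply]
  rcases hr with ⟨a, b, i, j, rfl⟩ | ⟨c, a, i, j, rfl⟩ | ⟨a, b, i, j, rfl⟩ | ⟨i, j, rfl⟩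
  · simp only [map_sub, mkDerivation_X, genBracket, tmul_add, map_add]
    ring
  · rw [map_sub, C_mul', Derivation.map_smul, mkDerivation_X, mkDerivation_X, genBracket,
      genBracket, tmul_smul, map_smul, map_smul, sub_self]
  · simp only [map_sub, map_sum, Derivation.leibniz, mkDerivation_X, Algebra.smul_def,
      RepAlg.algebraMap_X, genBracket, hD.2.1, map_add, lift_genPairing_lTensor_mulRight,
      lift_genPairing_rTensor_mulLeft, ← Finset.sum_add_distrib]
    exact sub_eq_zero.mpr (Finset.sum_congr rfl fun m _ => add_comm _ _)
  · rw [map_sub, mkDerivation_X, genBracket, hD.tmul_one, map_zero]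
    split_ifs <;> simp

theorem polyBracket_genBracket_eq_zero (hD : IsDoublePoisson k A D) (F : 𝒪) {G : 𝒪}
    (hG : algebraMap 𝒪 (RepAlg k A N) G = 0) : polyBracket (genBracket D) F G = 0 :=
  polyBracket_eq_zero_of_mem_span _ (fun _ => RepAlg.algebraMap_eq_zero_iff.mpr)
    (fun v _ => polyBracket_genBracket_X_of_mem_repRel hD v) F
    (RepAlg.algebraMap_eq_zero_iff.mp hG)

variable (N D) in
def repBracket (hD : IsDoublePoisson k A D) :
    RepAlg k A N →ₗ[k] RepAlg k A N →ₗ[k] RepAlg k A N :=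
  (IsScalarTower.toAlgHom k 𝒪 (RepAlg k A N)).toLinearMap.lift₂OfSurjective
    RepAlg.algebraMap_surjective (polyBracket (genBracket D))
    (fun F hF G => by
      rw [polyBracket_antisymm _ (genBracket_antisymm hD), polyBracket_genBracket_eq_zero hD G hF,
        neg_zero])
    (fun F _ hG => polyBracket_genBracket_eq_zero hD F hG)

theorem repBracket_algebraMap (hD : IsDoublePoisson k A D) (F G : 𝒪) :
    repBracket N D hD (algebraMap 𝒪 _ F) (algebraMap 𝒪 _ G) = polyBracket (genBracket D) F G :=
  LinearMap.lift₂OfSurjective_apply _ _ _ _ _ F G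

theorem repBracket_genL (hD : IsDoublePoisson k A D) (a b : A) (i j s t : Fin N) :
    repBracket N D hD (genL k A N i j a) (genL k A N s t b) =
      lift (genPairing k A N s j i t) (D (a ⊗ₜ b)) := by
  rw [← RepAlg.algebraMap_X, ← RepAlg.algebraMap_X, repBracket_algebraMap, polyBracket_X_X]
  rfl

theorem repBracket_antisymm (hD : IsDoublePoisson k A D) (x y : RepAlg k A N) :
    repBracket N D hD x y = -repBracket N D hD y x := by
  obtain ⟨F, rfl⟩ := RepAlg.algebraMap_surjective x
  obtain ⟨G, rfl⟩ := RepAlg.algebraMap_surjective y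
  simp only [repBracket_algebraMap, polyBracket_antisymm _ (genBracket_antisymm hD) F G]

theorem isLeibniz_repBracket (hD : IsDoublePoisson k A D) : IsLeibniz (repBracket N D hD) := by
  intro x y z
  obtain ⟨F, rfl⟩ := RepAlg.algebraMap_surjective x
  obtain ⟨G, rfl⟩ := RepAlg.algebraMap_surjective y
  obtain ⟨H, rfl⟩ := RepAlg.algebraMap_surjective z
  simp only [← map_mul, repBracket_algebraMap, polyBracket_mul_right, Algebra.smul_def]
  ring

theorem isLeibniz_repBracket_flip (hD : IsDoublePoisson k A D) :
    IsLeibniz (repBracket N D hD).flip := by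
  intro x y z
  obtain ⟨F, rfl⟩ := RepAlg.algebraMap_surjective x
  obtain ⟨G, rfl⟩ := RepAlg.algebraMap_surjective y
  obtain ⟨H, rfl⟩ := RepAlg.algebraMap_surjective z
  simp only [LinearMap.flip_apply, ← map_mul, repBracket_algebraMap, polyBracket_mul_left,
    Algebra.smul_def]
  ring

variable (k A N) in
def genTriple (α β γ δ ε ζ : Fin N) : (A ⊗[k] A) ⊗[k] A →ₗ[k] RepAlg k A N :=
  lift ((LinearMap.mul k (RepAlg k A N)).compl₁₂ (lift (genPairing k A N α β γ δ))
    (genL k A N ε ζ))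

theorem genTriple_tmul (α β γ δ ε ζ : Fin N) (x : A ⊗[k] A) (r : A) :
    genTriple k A N α β γ δ ε ζ (x ⊗ₜ r) =
      lift (genPairing k A N α β γ δ) x * genL k A N ε ζ r :=
  rfl

theorem genTriple_cyc (α β γ δ ε ζ : Fin N) (Z : (A ⊗[k] A) ⊗[k] A) :
    genTriple k A N α β γ δ ε ζ (cyc k A Z) = genTriple k A N γ δ ε ζ α β Z := by
  induction Z using TensorProduct.induction_on with
  | zero => simp only [map_zero]
  | add x y hx hy => simp only [map_add, hx, hy]
  | tmul x r =>
    induction x using TensorProduct.induction_on with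
    | zero => simp only [zero_tmul, map_zero]
    | add x y hx hy => simp only [add_tmul, map_add, hx, hy]
    | tmul p q =>
      simp only [cyc, LinearMap.comp_apply, LinearEquiv.coe_coe, comm_tmul, assoc_symm_tmul,
        genTriple_tmul, lift_genPairing_tmul]
      ring

theorem IsDoublePoisson.genTriple_jacobi (hD : IsDoublePoisson k A D) (a b c : A)
    (α β γ δ ε ζ : Fin N) :
    genTriple k A N α β γ δ ε ζ (leftExt k A D a (D (b ⊗ₜ c))) +
      genTriple k A N γ δ ε ζ α β (leftExt k A D b (D (c ⊗ₜ a))) +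
      genTriple k A N ε ζ α β γ δ (leftExt k A D c (D (a ⊗ₜ b))) = 0 := by
  have h := congrArg (genTriple k A N α β γ δ ε ζ) (hD.2.2 a b c)
  rwa [map_add, map_add, genTriple_cyc, genTriple_cyc, genTriple_cyc, map_zero] at h

variable {P : RepAlg k A N →ₗ[k] RepAlg k A N →ₗ[k] RepAlg k A N}

theorem IsLeibniz.apply_genL_lift_genPairing (hP : IsLeibniz P)
    (hgen : ∀ (a b : A) (i j s t : Fin N),
      P (genL k A N i j a) (genL k A N s t b) = lift (genPairing k A N s j i t) (D (a ⊗ₜ b)))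
    (a : A) (i j α β γ δ : Fin N) (T : A ⊗[k] A) :
    P (genL k A N i j a) (lift (genPairing k A N α β γ δ) T) =
      genTriple k A N α j i β γ δ (leftExt k A D a T) +
        genTriple k A N γ j i δ α β (leftExt k A D a (TensorProduct.comm k A A T)) := by
  induction T using TensorProduct.induction_on with
  | zero => simp only [map_zero, add_zero]
  | add x y hx hy => simp only [map_add, hx, hy]; abel
  | tmul p q =>
    rw [lift_genPairing_tmul, hP, hgen, hgen, comm_tmul]
    simp only [leftExt, LinearMap.rTensor_tmul, LinearMap.comp_apply, mk_apply, genTriple_tmul]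
    ring

theorem IsLeibniz.jacobiator_genL (hD : IsDoublePoisson k A D) (hP : IsLeibniz P)
    (hgen : ∀ (a b : A) (i j s t : Fin N),
      P (genL k A N i j a) (genL k A N s t b) = lift (genPairing k A N s j i t) (D (a ⊗ₜ b)))
    (a b c : A) (i j s t u v : Fin N) :
    jacobiator P (genL k A N i j a) (genL k A N s t b) (genL k A N u v c) = 0 := by
  have hcomm : ∀ p q, TensorProduct.comm k A A (D (p ⊗ₜ q)) = -D (q ⊗ₜ p) := fun p q => by
    rw [hD.1 q p, neg_neg]
  rw [jacobiator, hgen b c s t u v, hgen c a u v i j, hgen a b i j s t,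
    hP.apply_genL_lift_genPairing hgen, hP.apply_genL_lift_genPairing hgen,
    hP.apply_genL_lift_genPairing hgen, hcomm b c, hcomm c a, hcomm a b]
  simp only [map_neg]
  linear_combination hD.genTriple_jacobi a b c u j i t s v - hD.genTriple_jacobi a c b s j i v u t

end RepAlg

theorem induced_Poisson_bracket_on_RepAlg
    (D : A ⊗[k] A →ₗ[k] A ⊗[k] A) (hD : IsDoublePoisson k A D) :
    ∃! P : RepAlg k A N →ₗ[k] RepAlg k A N →ₗ[k] RepAlg k A N,
      (∀ F G, P F G = - P G F) ∧
      (∀ F G H, P F (P G H) + P G (P H F) + P H (P F G) = 0) ∧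
      (∀ F G H, P F (G * H) = P F G * H + G * P F H) ∧
      (∀ F G H, P (F * G) H = P F H * G + F * P G H) ∧
      (∀ (a b : A) (i j s t : Fin N),
        P (genL k A N i j a) (genL k A N s t b) =
          TensorProduct.lift (genPairing k A N s j i t) (D (a ⊗ₜ[k] b))) := by
  have hadjoin := RepAlg.adjoin_genL_eq_top (k := k) (A := A) (N := N)
  have hleib := isLeibniz_repBracket (N := N) hD
  have hleib' := isLeibniz_repBracket_flip (N := N) hD
  refine ⟨repBracket N D hD, ⟨repBracket_antisymm hD, ?_, hleib, fun F G H => hleib' H F G,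
    repBracket_genL hD⟩, ?_⟩
  · refine hleib.jacobiator_eq_zero hadjoin (repBracket_antisymm hD) ?_
    rintro - ⟨⟨a, i, j⟩, rfl⟩ - ⟨⟨b, s, t⟩, rfl⟩ - ⟨⟨c, u, v⟩, rfl⟩
    exact hleib.jacobiator_genL hD (repBracket_genL hD) a b c i j s t u v
  · rintro Q ⟨-, -, hQ, hQ', hQgen⟩
    refine IsLeibniz.ext hadjoin hQ (fun H F G => hQ' F G H) hleib hleib' ?_
    rintro - ⟨⟨a, i, j⟩, rfl⟩ - ⟨⟨b, s, t⟩, rfl⟩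
    rw [hQgen, repBracket_genL]

end
end

section
/- Let k be an algebraically closed field of characteristic zero and d, m ≥ 1. Let W̃ be a set of nonempty words of length at most m in the alphabet {1,…,d} containing exactly one representative of each cyclic-equivalence class of such words (no two distinct elements of W̃ are cyclic rotations of each other, and every nonempty word of length at most m is a cyclic rotation of some element of W̃). Then for every function a: W̃ → k there exist N ≥ 1 and matrices X_1,…,X_d ∈ Mat_N(k) such that tr(w(X_1,…,X_d)) = a(w) for every w ∈ W̃, where for a word w = w_1⋯w_l one sets w(X_1,…,X_d) := X_{w_1}⋯X_{w_l}. -/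
/-!
Induct on the words, adding them in order of increasing length. To adjust the trace of a new word
`v` of length `l` without disturbing shorter words or words that are not rotations of `v`, add a
diagonal block on `Fin l` in which `X_i` is the weighted adjacency matrix of the edges labelled `i`
of an oriented `l`-cycle whose `j`-th edge is labelled `v[j]`. A diagonal entry of a word `u`
evaluated there counts closed walks spelling `u`; for `|u| ≤ l` these exist only for `|u| = l` and
`u` a rotation of `v`. Putting the whole weight `c` on one edge, the block contributes `p • c` to
the trace of `v`, where `p ≥ 1` is the number of rotations fixing `v`; in characteristic zero
`c` can be chosen so that this is any prescribed value.
-/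

open Matrix Finset
open Fin.NatCast

theorem Fin.natCast_eq_zero_iff_eq_of_le {l n : ℕ} [NeZero l] (hn : 0 < n) (hnl : n ≤ l) :
    (n : Fin l) = 0 ↔ n = l := by
  rw [Fin.natCast_eq_zero]
  exact ⟨fun h => le_antisymm hnl (Nat.le_of_dvd hn h), fun h => h ▸ dvd_rfl⟩

theorem List.eq_rotate_iff_forall_getElem {α : Type*} {v u : List α} [NeZero v.length]
    (j : Fin v.length) (hl : u.length = v.length) :
    u = v.rotate j ↔ ∀ t : Fin u.length, u[t] = v[j + ((t : ℕ) : Fin v.length)] := by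
  have hval : ∀ t : ℕ, ((j + (t : Fin v.length) : Fin v.length) : ℕ) = (t + j) % v.length := by
    intro t
    rw [Fin.val_add, Fin.val_natCast, Nat.add_mod_mod, Nat.add_comm]
  rw [List.ext_get_iff]
  simp [hl, List.getElem_rotate, hval, Fin.forall_iff]

namespace Matrix

section WeightedShift

variable {ι R α : Type*} [DecidableEq ι] [AddMonoidWithOne ι]

def weightedShift [Zero R] (a : ι → R) : Matrix ι ι R :=
  of fun j j' => if j' = j + 1 then a j else 0

theorem list_prod_map_weightedShift_apply [Fintype ι] [CommSemiring R] (a : α → ι → R)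
    (u : List α) (j j' : ι) :
    (u.map fun i => weightedShift (a i)).prod j j' =
      if j' = j + u.length then ∏ t : Fin u.length, a u[t] (j + (t : ℕ)) else 0 := by
  induction u generalizing j with
  | nil => simp [one_apply, eq_comm]
  | cons b u ih =>
    have hshift : ∀ n : ℕ, j + ((n : ι) + 1) = j + 1 + n := by
      intro n
      rw [add_assoc, ← Nat.cast_one, ← Nat.cast_add, ← Nat.cast_add, Nat.add_comm]
    rw [List.map_cons, List.prod_cons, mul_apply, Finset.sum_eq_single (j + 1)]
    · rw [ih]
      simp only [weightedShift, of_apply, if_true, List.length_cons, Nat.cast_succ, hshift,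
        Fin.prod_univ_succ, Fin.val_succ, Fin.val_zero, Nat.cast_zero, add_zero]
      split_ifs <;> simp
    · intro x _ hx
      simp [weightedShift, hx]
    · simp

end WeightedShift

section LabelledCycle

variable {R α : Type*} [CommSemiring R] [DecidableEq α]

-- `labelledCycle v f i` is the adjacency matrix of the edges `j → j + 1` (indices mod `v.length`)
-- labelled `v[j] = i`, the `j`-th edge carrying the weight `f j`.
def labelledCycle (v : List α) [NeZero v.length] (f : Fin v.length → R) (i : α) :
    Matrix (Fin v.length) (Fin v.length) R :=
  weightedShift fun j => if v[j] = i then f j else 0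

theorem trace_list_prod_map_labelledCycle (v : List α) [NeZero v.length] (f : Fin v.length → R)
    {u : List α} (hu : u ≠ []) (hlen : u.length ≤ v.length) :
    trace (u.map (labelledCycle v f)).prod =
      #{j : Fin v.length | u = v.rotate j} * ∏ j, f j := by
  have hdiag : ∀ j : Fin v.length, (u.map (labelledCycle v f)).prod j j =
      if u = v.rotate j then ∏ j, f j else 0 := by
    intro j
    unfold labelledCycle
    rw [list_prod_map_weightedShift_apply]
    by_cases hl : u.length = v.length
    · have hzero : (u.length : Fin v.length) = 0 := by rw [hl, Fin.natCast_self]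
      have hprod : ∏ t : Fin u.length, f (j + ((t : ℕ) : Fin v.length)) = ∏ j, f j := by
        refine (Fin.prod_congr' (fun s : Fin v.length => f (j + ((s : ℕ) : Fin v.length))) hl).trans
          ?_
        simpa only [Fin.cast_val_eq_self, Equiv.coe_addLeft] using
          Equiv.prod_comp (Equiv.addLeft j) f
      simp only [hzero, add_zero, if_true, Fintype.prod_ite_zero, hprod,
        List.eq_rotate_iff_forall_getElem j hl, eq_comm]
    · have hne : ∀ r : ℕ, u ≠ v.rotate r := fun r h => hl (by simp [h])
      have hj : j ≠ j + u.length := by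
        rwa [Ne, left_eq_add, Fin.natCast_eq_zero_iff_eq_of_le (List.length_pos_iff.mpr hu) hlen]
      rw [if_neg hj, if_neg (hne j)]
  simp only [trace, diag_apply, hdiag]
  rw [← Finset.sum_filter, Finset.sum_const, nsmul_eq_mul]

end LabelledCycle

section BlockSum

variable {m n p α R : Type*} [Fintype m] [Fintype n] [Fintype p] [CommSemiring R]

theorem list_prod_map_fromBlocks [DecidableEq m] [DecidableEq n] (X : α → Matrix m m R)
    (Y : α → Matrix n n R) (w : List α) :
    (w.map fun i => fromBlocks (X i) 0 0 (Y i)).prod =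
      fromBlocks (w.map X).prod 0 0 (w.map Y).prod := by
  induction w with
  | nil => simp [fromBlocks_one]
  | cons b w ih => simp [ih, fromBlocks_multiply]

theorem trace_fromBlocks_zero (A : Matrix m m R) (D : Matrix n n R) :
    trace (fromBlocks A 0 0 D) = trace A + trace D := by
  simp [trace, Fintype.sum_sum_type]

theorem trace_reindex (e : m ≃ n) (A : Matrix m m R) : trace (reindex e e A) = trace A :=
  Equiv.sum_comp e.symm fun i => A i i

theorem list_prod_map_reindex [DecidableEq m] [DecidableEq n] (e : m ≃ n) (X : α → Matrix m m R)
    (w : List α) :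
    (w.map fun i => reindex e e (X i)).prod = reindex e e (w.map X).prod := by
  have h := map_list_prod (reindexAlgEquiv R R e) (w.map X)
  rw [List.map_map] at h
  exact h.symm

theorem trace_list_prod_map_blockSum [DecidableEq m] [DecidableEq n] [DecidableEq p]
    (e : m ⊕ n ≃ p) (X : α → Matrix m m R) (Y : α → Matrix n n R) (w : List α) :
    trace (w.map fun i => reindex e e (fromBlocks (X i) 0 0 (Y i))).prod =
      trace (w.map X).prod + trace (w.map Y).prod := by
  rw [list_prod_map_reindex, trace_reindex, list_prod_map_fromBlocks, trace_fromBlocks_zero]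

end BlockSum

end Matrix

section

variable {α K : Type*} [DecidableEq α] [Field K] [CharZero K]

theorem exists_trace_list_prod_map_separating {v : List α} (hv : v ≠ []) (c : K) :
    ∃ Y : α → Matrix (Fin v.length) (Fin v.length) K, trace (v.map Y).prod = c ∧
      ∀ u ≠ [], u.length ≤ v.length → (∀ r : ℕ, u ≠ v.rotate r) → trace (u.map Y).prod = 0 := by
  have : NeZero v.length := ⟨by simpa using hv⟩
  set p := #{j : Fin v.length | v = v.rotate j}
  have hp : (p : K) ≠ 0 := Nat.cast_ne_zero.mpr <| Finset.card_ne_zero_of_mem (a := 0) (by simp)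
  refine ⟨labelledCycle v fun j => if j = 0 then c / p else 1, ?_, fun u hu hlen hrot => ?_⟩
  · rw [trace_list_prod_map_labelledCycle v _ hv le_rfl, Fintype.prod_ite_eq',
      mul_div_cancel₀ c hp]
  · rw [trace_list_prod_map_labelledCycle v _ hu hlen, Finset.card_eq_zero.mpr, Nat.cast_zero,
      zero_mul]
    exact Finset.filter_eq_empty_iff.mpr fun j _ => hrot j

theorem exists_trace_list_prod_map_eq_on_finset (F : Finset (List α)) (hne : ∀ w ∈ F, w ≠ [])
    (hrot : ∀ w₁ ∈ F, ∀ w₂ ∈ F, (∃ r : ℕ, w₂ = w₁.rotate r) → w₁ = w₂) (a : List α → K) :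
    ∃ N, 1 ≤ N ∧ ∃ X : α → Matrix (Fin N) (Fin N) K, ∀ w ∈ F, trace (w.map X).prod = a w := by
  revert hne hrot
  refine F.induction_on_max_value List.length (fun _ _ => ⟨1, le_rfl, 0, by simp⟩)
    fun v F hvF hmax ih hne hrot => ?_
  obtain ⟨N, hN, X, hX⟩ := ih (fun w hw => hne w (mem_insert_of_mem hw))
    fun w₁ h₁ w₂ h₂ => hrot w₁ (mem_insert_of_mem h₁) w₂ (mem_insert_of_mem h₂)
  obtain ⟨Y, hYv, hY⟩ :=
    exists_trace_list_prod_map_separating (hne v (mem_insert_self v F)) (a v - trace (v.map X).prod)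
  refine ⟨N + v.length, hN.trans (Nat.le_add_right _ _),
    fun i => reindex finSumFinEquiv finSumFinEquiv (fromBlocks (X i) 0 0 (Y i)), fun w hw => ?_⟩
  rw [trace_list_prod_map_blockSum]
  rcases mem_insert.mp hw with rfl | hw
  · rw [hYv, add_sub_cancel]
  · have hnrot : ∀ r : ℕ, w ≠ v.rotate r := fun r h =>
      hvF (hrot v (mem_insert_self v F) w (mem_insert_of_mem hw) ⟨r, h⟩ ▸ hw)
    rw [hX w hw, hY w (hne w (mem_insert_of_mem hw)) (hmax w hw) hnrot, add_zero]

end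

theorem trace_values_realizable_general
    (k : Type*) [Field k] [CharZero k]
    (d m : ℕ)
    (W : Set (List (Fin d)))
    -- every element of `W` is a nonempty word of length at most `m`
    (hW : ∀ w ∈ W, w ≠ [] ∧ w.length ≤ m)
    -- no two distinct elements of `W` are cyclic rotations of each other
    (hrep : ∀ w₁ ∈ W, ∀ w₂ ∈ W, (∃ r : ℕ, w₂ = w₁.rotate r) → w₁ = w₂)
    (a : List (Fin d) → k) :
    ∃ (N : ℕ), 1 ≤ N ∧ ∃ X : Fin d → Matrix (Fin N) (Fin N) k,
      ∀ w ∈ W, Matrix.trace ((w.map X).prod) = a w := by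
  have hW_fin : W.Finite := (List.finite_length_le (Fin d) m).subset fun w hw => (hW w hw).2
  obtain ⟨N, hN, X, hX⟩ := exists_trace_list_prod_map_eq_on_finset hW_fin.toFinset
    (fun w hw => (hW w (hW_fin.mem_toFinset.mp hw)).1)
    (fun w₁ h₁ w₂ h₂ => hrep w₁ (hW_fin.mem_toFinset.mp h₁) w₂ (hW_fin.mem_toFinset.mp h₂)) a
  exact ⟨N, hN, X, fun w hw => hX w (hW_fin.mem_toFinset.mpr hw)⟩

theorem trace_values_realizable
    (k : Type*) [Field k] [IsAlgClosed k] [CharZero k]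
    (d m : ℕ) (hd : 1 ≤ d) (hm : 1 ≤ m)
    (W : Set (List (Fin d)))
    -- every element of `W` is a nonempty word of length at most `m`
    (hW : ∀ w ∈ W, w ≠ [] ∧ w.length ≤ m)
    -- no two distinct elements of `W` are cyclic rotations of each other
    (hrep : ∀ w₁ ∈ W, ∀ w₂ ∈ W, (∃ r : ℕ, w₂ = w₁.rotate r) → w₁ = w₂)
    -- every nonempty word of length at most `m` is a cyclic rotation of some element of `W`
    (hfull : ∀ w : List (Fin d), w ≠ [] → w.length ≤ m → ∃ v ∈ W, ∃ r : ℕ, w = v.rotate r)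
    (a : List (Fin d) → k) :
    ∃ (N : ℕ), 1 ≤ N ∧ ∃ X : Fin d → Matrix (Fin N) (Fin N) k,
      ∀ w ∈ W, Matrix.trace ((w.map X).prod) = a w :=
  trace_values_realizable_general k d m W hW hrep a
end
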